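/- Let τ > 0, τ ≠ 1, v > 0, μ > 0, and define T̃_±(ω), T̂_±(ω) as the two solution pairs of the matching system. Then: for ω ≤ v²/(τ²+1)² neither pair lies in the open square (−1,1)², for v²/(τ²+1)² < ω ≤ v²/(τ²−1)² exactly one pair (T̃₋, T̃₊) lies in (−1,1)², and for ω > v²/(τ²−1)² both pairs lie in (−1,1)². -/
import Mathlib
set_option maxHeartbeats 1000000

open Set Real

noncomputable section

private lemma sq_lt_aux {x c : ℝ} (hc : 0 ≤ c) (h : x ^ 2 < c ^ 2) : x < c :=
  lt_of_pow_lt_pow_left₀ 2 hc h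

private lemma gt_aux {x c : ℝ} (hx : 0 ≤ x) (h : c < 0 ∨ c ^ 2 < x ^ 2) : c < x := by
  rcases h with h | h
  · exact h.trans_le hx
  · exact lt_of_pow_lt_pow_left₀ 2 hx h

private lemma ge_aux {x c : ℝ} (hx : 0 ≤ x) (h : c ≤ 0 ∨ c ^ 2 ≤ x ^ 2) : c ≤ x := by
  rcases h with h | h
  · exact h.trans hx
  · exact le_of_pow_le_pow_left₀ two_ne_zero hx h

private lemma coreTildeIn {t s u r : ℝ} (ht0 : 0 < t) (hs0 : 0 < s) (hu : 0 < u) (hr : 0 ≤ r)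
    (hr2 : r ^ 2 = u ^ 2 * t + (t * s ^ 2 - 1) * (t - 1))
    (hsgn : 1 < t ∧ 1 < s ∨ t < 1 ∧ s < 1) (h2 : u < s + 1) :
    (-1 < (u - s * r) / (t * s ^ 2 - 1) ∧ (u - s * r) / (t * s ^ 2 - 1) < 1) ∧
    (-1 < (t * s * u - r) / (t * s ^ 2 - 1) ∧ (t * s * u - r) / (t * s ^ 2 - 1) < 1) := by
  have e1 : (s * r) ^ 2 = s ^ 2 * (u ^ 2 * t + (t * s ^ 2 - 1) * (t - 1)) := by
    rw [mul_pow, hr2]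
  rcases hsgn with ⟨ht1, hs1⟩ | ⟨ht1, hs1⟩
  · -- τ > 1
    have hD : 0 < t * s ^ 2 - 1 := by nlinarith
    have hts : 1 < t * s := by nlinarith
    refine ⟨⟨?_, ?_⟩, ?_, ?_⟩
    · rw [lt_div_iff₀ hD]
      have : s * r < u + (t * s ^ 2 - 1) := by
        refine sq_lt_aux (by nlinarith) ?_
        nlinarith [e1, mul_pos hD (mul_pos (show (0:ℝ) < s + 1 - u by linarith)
          (show (0:ℝ) < s + u - 1 by linarith))]
      linarith
    · rw [div_lt_one hD]
      have : u - (t * s ^ 2 - 1) < s * r := by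
        refine gt_aux (by positivity) ?_
        rcases le_or_gt u (s - 1) with hc | hc
        · left; nlinarith [mul_pos hs0 (show (0:ℝ) < t * s - 1 by linarith)]
        · right
          nlinarith [e1, mul_pos (mul_pos hD (show (0:ℝ) < u + 1 - s by linarith))
            (show (0:ℝ) < s + u + 1 by linarith)]
      linarith
    · rw [lt_div_iff₀ hD]
      have : r < t * s * u + (t * s ^ 2 - 1) := by
        refine sq_lt_aux (by nlinarith [mul_pos (mul_pos ht0 hs0) hu]) ?_
        nlinarith [hr2, mul_pos (mul_pos hD ht0) (mul_pos
          (show (0:ℝ) < u + s - 1 by linarith) (show (0:ℝ) < u + s + 1 by linarith))]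
      linarith
    · rw [div_lt_one hD]
      have : t * s * u - (t * s ^ 2 - 1) < r := by
        refine gt_aux hr ?_
        rcases le_or_gt u (s - 1) with hc | hc
        · left; nlinarith [mul_nonneg (mul_pos ht0 hs0).le (show (0:ℝ) ≤ s - 1 - u by linarith)]
        · right
          nlinarith [hr2, mul_pos (mul_pos hD ht0) (mul_pos
            (show (0:ℝ) < s + 1 - u by linarith) (show (0:ℝ) < u + 1 - s by linarith))]
      linarith
  · -- τ < 1
    have hD : t * s ^ 2 - 1 < 0 := by nlinarith
    have hts : t * s < 1 := by nlinarith
    refine ⟨⟨?_, ?_⟩, ?_, ?_⟩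
    · rw [lt_div_iff_of_neg hD]
      have : u + (t * s ^ 2 - 1) < s * r := by
        refine gt_aux (by positivity) ?_
        rcases le_or_gt u (1 - s) with hc | hc
        · left; nlinarith [mul_pos hs0 (show (0:ℝ) < 1 - t * s by linarith)]
        · right
          nlinarith [e1, mul_pos (mul_pos (show (0:ℝ) < 1 - t * s ^ 2 by linarith)
            (show (0:ℝ) < s + 1 - u by linarith)) (show (0:ℝ) < s + u - 1 by linarith)]
      linarith
    · rw [div_lt_iff_of_neg hD]
      have : s * r < u - (t * s ^ 2 - 1) := by
        refine sq_lt_aux (by nlinarith) ?_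
        nlinarith [e1, mul_pos (mul_pos (show (0:ℝ) < 1 - t * s ^ 2 by linarith)
          (show (0:ℝ) < u + 1 - s by linarith)) (show (0:ℝ) < s + u + 1 by linarith)]
      linarith
    · rw [lt_div_iff_of_neg hD]
      have : t * s * u + (t * s ^ 2 - 1) < r := by
        refine gt_aux hr ?_
        rcases le_or_gt u (1 - s) with hc | hc
        · left; nlinarith [mul_nonneg (mul_pos ht0 hs0).le (show (0:ℝ) ≤ 1 - s - u by linarith)]
        · right
          nlinarith [hr2, mul_pos (mul_pos (show (0:ℝ) < 1 - t * s ^ 2 by linarith) ht0)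
            (mul_pos (show (0:ℝ) < u + s - 1 by linarith) (show (0:ℝ) < u + s + 1 by linarith))]
      linarith
    · rw [div_lt_iff_of_neg hD]
      have : r < t * s * u - (t * s ^ 2 - 1) := by
        refine sq_lt_aux (by nlinarith [mul_pos (mul_pos ht0 hs0) hu]) ?_
        nlinarith [hr2, mul_pos (mul_pos (show (0:ℝ) < 1 - t * s ^ 2 by linarith) ht0)
          (mul_pos (show (0:ℝ) < s + 1 - u by linarith) (show (0:ℝ) < u + 1 - s by linarith))]
      linarith

private lemma coreHatFail {t s u r : ℝ} (ht0 : 0 < t) (hs0 : 0 < s) (hu : 0 < u) (hr : 0 ≤ r)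
    (hr2 : r ^ 2 = u ^ 2 * t + (t * s ^ 2 - 1) * (t - 1))
    (hsgn : 1 < t ∧ 1 < s ∨ t < 1 ∧ s < 1) (h1 : (s - 1) ^ 2 ≤ u ^ 2) :
    ¬ (-1 < (u + s * r) / (t * s ^ 2 - 1) ∧ (u + s * r) / (t * s ^ 2 - 1) < 1) := by
  have e1 : (s * r) ^ 2 = s ^ 2 * (u ^ 2 * t + (t * s ^ 2 - 1) * (t - 1)) := by
    rw [mul_pow, hr2]
  rcases hsgn with ⟨ht1, hs1⟩ | ⟨ht1, hs1⟩
  · -- τ > 1 : show 1 ≤ E3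
    have hD : 0 < t * s ^ 2 - 1 := by nlinarith
    have hu1 : s - 1 ≤ u := by nlinarith
    intro hmem
    have : (1:ℝ) ≤ (u + s * r) / (t * s ^ 2 - 1) := by
      rw [le_div_iff₀ hD]
      have : (t * s ^ 2 - 1) - u ≤ s * r := by
        refine ge_aux (by positivity) ?_
        rcases le_or_gt (t * s ^ 2 - 1) u with hc | hc
        · left; linarith
        · right
          nlinarith [e1, mul_nonneg (mul_nonneg hD.le (show (0:ℝ) ≤ u + 1 - s by linarith))
            (show (0:ℝ) ≤ s + u + 1 by linarith)]
      linarith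
    linarith [hmem.2]
  · -- τ < 1 : show E3 ≤ -1
    have hD : t * s ^ 2 - 1 < 0 := by nlinarith
    have hu1 : 1 - s ≤ u := by nlinarith
    intro hmem
    have : (u + s * r) / (t * s ^ 2 - 1) ≤ -1 := by
      rw [div_le_iff_of_neg hD]
      have : (1 - (t * s ^ 2)) - u ≤ s * r := by
        refine ge_aux (by positivity) ?_
        rcases le_or_gt (1 - t * s ^ 2) u with hc | hc
        · left; linarith
        · right
          have hu2 : u < 1 := by nlinarith
          nlinarith [e1, mul_nonneg (mul_nonneg (show (0:ℝ) ≤ 1 - t * s ^ 2 by linarith)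
            (show (0:ℝ) ≤ s + 1 - u by linarith)) (show (0:ℝ) ≤ s + u - 1 by linarith)]
      linarith
    linarith [hmem.1]

private lemma coreTildeFail {t s u r : ℝ} (ht0 : 0 < t) (hs0 : 0 < s) (hu : 0 < u) (hr : 0 ≤ r)
    (hr2 : r ^ 2 = u ^ 2 * t + (t * s ^ 2 - 1) * (t - 1))
    (hsgn : 1 < t ∧ 1 < s ∨ t < 1 ∧ s < 1) (h : s + 1 ≤ u) :
    ¬ ((-1 < (u - s * r) / (t * s ^ 2 - 1) ∧ (u - s * r) / (t * s ^ 2 - 1) < 1) ∧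
       (-1 < (t * s * u - r) / (t * s ^ 2 - 1) ∧ (t * s * u - r) / (t * s ^ 2 - 1) < 1)) := by
  have e1 : (s * r) ^ 2 = s ^ 2 * (u ^ 2 * t + (t * s ^ 2 - 1) * (t - 1)) := by
    rw [mul_pow, hr2]
  rcases hsgn with ⟨ht1, hs1⟩ | ⟨ht1, hs1⟩
  · -- τ > 1 : E1 ≤ -1
    have hD : 0 < t * s ^ 2 - 1 := by nlinarith
    rintro ⟨⟨h1a, -⟩, -⟩
    have : (u - s * r) / (t * s ^ 2 - 1) ≤ -1 := by
      rw [div_le_iff₀ hD]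
      have : u + (t * s ^ 2 - 1) ≤ s * r := by
        refine ge_aux (by positivity) (Or.inr ?_)
        nlinarith [e1, mul_nonneg (mul_nonneg hD.le (show (0:ℝ) ≤ u - s - 1 by linarith))
          (show (0:ℝ) ≤ s + u - 1 by linarith)]
      linarith
    linarith
  · -- τ < 1 : E2 ≥ 1
    have hD : t * s ^ 2 - 1 < 0 := by nlinarith
    rintro ⟨-, ⟨-, h2b⟩⟩
    have : (1:ℝ) ≤ (t * s * u - r) / (t * s ^ 2 - 1) := by
      rw [le_div_iff_of_neg hD]
      have : t * s * u - (t * s ^ 2 - 1) ≤ r := by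
        refine ge_aux hr (Or.inr ?_)
        nlinarith [hr2, mul_nonneg (mul_nonneg (show (0:ℝ) ≤ 1 - t * s ^ 2 by linarith) ht0.le)
          (mul_nonneg (show (0:ℝ) ≤ u - s - 1 by linarith) (show (0:ℝ) ≤ u - s + 1 by linarith))]
      linarith
    linarith

private lemma coreHatIn {t s u r : ℝ} (ht0 : 0 < t) (hs0 : 0 < s) (hu : 0 < u) (hr : 0 ≤ r)
    (hr2 : r ^ 2 = u ^ 2 * t + (t * s ^ 2 - 1) * (t - 1))
    (hsgn : 1 < t ∧ 1 < s ∨ t < 1 ∧ s < 1) (h : u ^ 2 < (s - 1) ^ 2) :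
    (-1 < (u + s * r) / (t * s ^ 2 - 1) ∧ (u + s * r) / (t * s ^ 2 - 1) < 1) ∧
    (-1 < (t * s * u + r) / (t * s ^ 2 - 1) ∧ (t * s * u + r) / (t * s ^ 2 - 1) < 1) := by
  have e1 : (s * r) ^ 2 = s ^ 2 * (u ^ 2 * t + (t * s ^ 2 - 1) * (t - 1)) := by
    rw [mul_pow, hr2]
  rcases hsgn with ⟨ht1, hs1⟩ | ⟨ht1, hs1⟩
  · -- τ > 1, u < s - 1
    have hD : 0 < t * s ^ 2 - 1 := by nlinarith
    have hts : 1 < t * s := by nlinarith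
    have hu1 : u < s - 1 := by nlinarith
    refine ⟨⟨?_, ?_⟩, ?_, ?_⟩
    · rw [lt_div_iff₀ hD]
      nlinarith [mul_nonneg hs0.le hr]
    · rw [div_lt_one hD]
      have : s * r < (t * s ^ 2 - 1) - u := by
        refine sq_lt_aux (by nlinarith [mul_pos hs0 (show (0:ℝ) < t * s - 1 by linarith)]) ?_
        nlinarith [e1, mul_pos (mul_pos hD (show (0:ℝ) < s - u - 1 by linarith))
          (show (0:ℝ) < s + u + 1 by linarith)]
      linarith
    · rw [lt_div_iff₀ hD]
      nlinarith [hr, mul_pos (mul_pos ht0 hs0) hu]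
    · rw [div_lt_one hD]
      have : r < (t * s ^ 2 - 1) - t * s * u := by
        have hc0 : (0:ℝ) < (t * s ^ 2 - 1) - t * s * u := by
          nlinarith [mul_pos (mul_pos ht0 hs0) (show (0:ℝ) < s - 1 - u by linarith)]
        refine sq_lt_aux hc0.le ?_
        nlinarith [hr2, mul_pos (mul_pos hD ht0) (mul_pos
          (show (0:ℝ) < s - u - 1 by linarith) (show (0:ℝ) < s - u + 1 by linarith))]
      linarith
  · -- τ < 1, u < 1 - s
    have hD : t * s ^ 2 - 1 < 0 := by nlinarith
    have hts : t * s < 1 := by nlinarith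
    have hu1 : u < 1 - s := by nlinarith
    refine ⟨⟨?_, ?_⟩, ?_, ?_⟩
    · rw [lt_div_iff_of_neg hD]
      have : s * r < (1 - t * s ^ 2) - u := by
        refine sq_lt_aux (by nlinarith [mul_pos hs0 (show (0:ℝ) < 1 - t * s by linarith)]) ?_
        nlinarith [e1, mul_pos (mul_pos (show (0:ℝ) < 1 - t * s ^ 2 by linarith)
          (show (0:ℝ) < s + 1 - u by linarith)) (show (0:ℝ) < 1 - s - u by linarith)]
      linarith
    · rw [div_lt_iff_of_neg hD]
      nlinarith [mul_nonneg hs0.le hr]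
    · rw [lt_div_iff_of_neg hD]
      have : r < (1 - t * s ^ 2) - t * s * u := by
        have hc0 : (0:ℝ) < (1 - t * s ^ 2) - t * s * u := by
          nlinarith [mul_pos (mul_pos ht0 hs0) (show (0:ℝ) < 1 - s - u by linarith)]
        refine sq_lt_aux hc0.le ?_
        nlinarith [hr2, mul_pos (mul_pos (show (0:ℝ) < 1 - t * s ^ 2 by linarith) ht0)
          (mul_pos (show (0:ℝ) < 1 - u - s by linarith) (show (0:ℝ) < 1 + u + s by linarith))]
      linarith
    · rw [div_lt_iff_of_neg hD]
      nlinarith [hr, mul_pos (mul_pos ht0 hs0) hu]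
/-- `A(ω) = (v²/ω)τ^{2μ} + (τ^{2μ+4}-1)(τ^{2μ}-1)`. -/
def Aq (τ v μ ω : ℝ) : ℝ :=
  v ^ 2 / ω * τ ^ (2 * μ) + (τ ^ (2 * μ + 4) - 1) * (τ ^ (2 * μ) - 1)

/-- The ground-state branch `T̃₋`. -/
def Ttm (τ v μ ω : ℝ) : ℝ :=
  1 / (τ ^ (2 * μ + 4) - 1) * (v / Real.sqrt ω - τ ^ 2 * Real.sqrt (Aq τ v μ ω))

/-- The ground-state branch `T̃₊`. -/
def Ttp (τ v μ ω : ℝ) : ℝ :=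
  1 / (τ ^ (2 * μ + 4) - 1) * (τ ^ (2 * μ + 2) * (v / Real.sqrt ω) - Real.sqrt (Aq τ v μ ω))

/-- The excited branch `T̂₋`. -/
def Thm (τ v μ ω : ℝ) : ℝ :=
  1 / (τ ^ (2 * μ + 4) - 1) * (v / Real.sqrt ω + τ ^ 2 * Real.sqrt (Aq τ v μ ω))

/-- The excited branch `T̂₊`. -/
def Thp (τ v μ ω : ℝ) : ℝ :=
  1 / (τ ^ (2 * μ + 4) - 1) * (τ ^ (2 * μ + 2) * (v / Real.sqrt ω) + Real.sqrt (Aq τ v μ ω))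

/-- admissibility trichotomy.  For `ω ≤ v²/(τ²+1)²` neither pair lies in the
open square `(-1,1)²`; for `v²/(τ²+1)² < ω ≤ v²/(τ²-1)²` exactly the pair `(T̃₋,T̃₊)` does;
for `ω > v²/(τ²-1)²` both pairs do. -/
theorem admissibility_trichotomy
    (τ v μ : ℝ) (hτ : 0 < τ) (hτ1 : τ ≠ 1) (hv : 0 < v) (hμ : 0 < μ) :
    (∀ ω : ℝ, 0 < ω → ω ≤ v ^ 2 / (τ ^ 2 + 1) ^ 2 →
      ¬ (Ttm τ v μ ω ∈ Ioo (-1:ℝ) 1 ∧ Ttp τ v μ ω ∈ Ioo (-1:ℝ) 1) ∧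
      ¬ (Thm τ v μ ω ∈ Ioo (-1:ℝ) 1 ∧ Thp τ v μ ω ∈ Ioo (-1:ℝ) 1)) ∧
    (∀ ω : ℝ, v ^ 2 / (τ ^ 2 + 1) ^ 2 < ω → ω ≤ v ^ 2 / (τ ^ 2 - 1) ^ 2 →
      (Ttm τ v μ ω ∈ Ioo (-1:ℝ) 1 ∧ Ttp τ v μ ω ∈ Ioo (-1:ℝ) 1) ∧
      ¬ (Thm τ v μ ω ∈ Ioo (-1:ℝ) 1 ∧ Thp τ v μ ω ∈ Ioo (-1:ℝ) 1)) ∧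
    (∀ ω : ℝ, v ^ 2 / (τ ^ 2 - 1) ^ 2 < ω →
      (Ttm τ v μ ω ∈ Ioo (-1:ℝ) 1 ∧ Ttp τ v μ ω ∈ Ioo (-1:ℝ) 1) ∧
      (Thm τ v μ ω ∈ Ioo (-1:ℝ) 1 ∧ Thp τ v μ ω ∈ Ioo (-1:ℝ) 1)) := by
  have h2μ : (0:ℝ) < 2 * μ := by linarith
  obtain ⟨s, hsdef⟩ : ∃ x, τ ^ 2 = x := ⟨_, rfl⟩
  obtain ⟨t, htdef⟩ : ∃ x, τ ^ (2 * μ) = x := ⟨_, rfl⟩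
  rw [hsdef]
  have hs0 : 0 < s := by rw [← hsdef]; positivity
  have ht0 : 0 < t := htdef ▸ Real.rpow_pos_of_pos hτ _
  have hsgn : 1 < t ∧ 1 < s ∨ t < 1 ∧ s < 1 := by
    rcases hτ1.lt_or_gt with h | h
    · right
      refine ⟨?_, ?_⟩
      · rw [← htdef]; exact Real.rpow_lt_one hτ.le h h2μ
      · rw [← hsdef]; nlinarith
    · left
      refine ⟨?_, ?_⟩
      · rw [← htdef]; exact (Real.one_lt_rpow_iff_of_pos hτ).mpr (Or.inl ⟨h, h2μ⟩)
      · rw [← hsdef]; nlinarith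
  have hprod : 0 ≤ (t * s ^ 2 - 1) * (t - 1) := by
    rcases hsgn with ⟨h1, h2⟩ | ⟨h1, h2⟩
    · have a1 : (0:ℝ) ≤ t * s ^ 2 - 1 := by
        nlinarith [mul_pos hs0 hs0, mul_pos ht0 (mul_pos hs0 hs0)]
      have a2 : (0:ℝ) ≤ t - 1 := by linarith
      exact mul_nonneg a1 a2
    · have a1 : t * s ^ 2 - 1 ≤ 0 := by
        nlinarith [mul_pos hs0 hs0, mul_pos ht0 (mul_pos hs0 hs0)]
      have a2 : t - 1 ≤ 0 := by linarith
      nlinarith [mul_nonneg (neg_nonneg.mpr a1) (neg_nonneg.mpr a2)]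
  have hs1 : (0:ℝ) < (s - 1) ^ 2 := by
    rcases hsgn with ⟨-, h⟩ | ⟨-, h⟩ <;> nlinarith
  have ht2 : τ ^ ((2:ℝ)) = s := by
    rw [show ((2:ℝ)) = ((2:ℕ):ℝ) by norm_num, Real.rpow_natCast]; exact hsdef
  have ht4 : τ ^ ((4:ℝ)) = s ^ 2 := by
    rw [show ((4:ℝ)) = ((4:ℕ):ℝ) by norm_num, Real.rpow_natCast, ← hsdef]; ring
  have hpow4 : τ ^ (2 * μ + 4) = t * s ^ 2 := by
    rw [Real.rpow_add hτ, ht4, htdef]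
  have hpow2 : τ ^ (2 * μ + 2) = t * s := by
    rw [Real.rpow_add hτ, ht2, htdef]
  have setup : ∀ ω : ℝ, 0 < ω → ∃ u r : ℝ, 0 < u ∧ 0 ≤ r ∧
      r ^ 2 = u ^ 2 * t + (t * s ^ 2 - 1) * (t - 1) ∧
      u ^ 2 = v ^ 2 / ω ∧
      Ttm τ v μ ω = (u - s * r) / (t * s ^ 2 - 1) ∧
      Ttp τ v μ ω = (t * s * u - r) / (t * s ^ 2 - 1) ∧
      Thm τ v μ ω = (u + s * r) / (t * s ^ 2 - 1) ∧
      Thp τ v μ ω = (t * s * u + r) / (t * s ^ 2 - 1) := by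
    intro ω hω
    have hu0 : 0 < v / Real.sqrt ω := div_pos hv (Real.sqrt_pos.mpr hω)
    have hu2 : (v / Real.sqrt ω) ^ 2 = v ^ 2 / ω := by
      rw [div_pow, Real.sq_sqrt hω.le]
    have hA : Aq τ v μ ω = (v / Real.sqrt ω) ^ 2 * t + (t * s ^ 2 - 1) * (t - 1) := by
      unfold Aq
      rw [hpow4, htdef, hu2]
    have hAnn : 0 ≤ Aq τ v μ ω := by
      rw [hA]
      nlinarith [mul_pos (pow_pos hu0 2) ht0, hprod]
    refine ⟨v / Real.sqrt ω, Real.sqrt (Aq τ v μ ω), hu0, Real.sqrt_nonneg _, ?_, hu2,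
      ?_, ?_, ?_, ?_⟩
    · rw [Real.sq_sqrt hAnn, hA]
    · unfold Ttm; rw [hpow4, hsdef]; ring
    · unfold Ttp; rw [hpow4, hpow2]; ring
    · unfold Thm; rw [hpow4, hsdef]; ring
    · unfold Thp; rw [hpow4, hpow2]; ring
  refine ⟨?_, ?_, ?_⟩
  · intro ω hω hωle
    obtain ⟨u, r, hu, hr, hr2, hu2, e1, e2, e3, e4⟩ := setup ω hω
    have hreg : s + 1 ≤ u := by
      have hq : (s + 1) ^ 2 ≤ u ^ 2 := by
        rw [hu2, le_div_iff₀ hω]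
        have := (le_div_iff₀ (by positivity : (0:ℝ) < (s + 1) ^ 2)).mp hωle
        linarith
      nlinarith
    have hreg2 : (s - 1) ^ 2 ≤ u ^ 2 := by nlinarith
    constructor
    · simp only [Set.mem_Ioo, e1, e2]
      exact coreTildeFail ht0 hs0 hu hr hr2 hsgn hreg
    · simp only [Set.mem_Ioo, e3, e4]
      intro hc
      exact coreHatFail ht0 hs0 hu hr hr2 hsgn hreg2 hc.1
  · intro ω hωgt hωle
    have hω : 0 < ω := lt_trans (by positivity) hωgt
    obtain ⟨u, r, hu, hr, hr2, hu2, e1, e2, e3, e4⟩ := setup ω hω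
    have hreg : u < s + 1 := by
      have hq : u ^ 2 < (s + 1) ^ 2 := by
        rw [hu2, div_lt_iff₀ hω]
        have := (div_lt_iff₀ (by positivity : (0:ℝ) < (s + 1) ^ 2)).mp hωgt
        linarith
      nlinarith
    have hreg2 : (s - 1) ^ 2 ≤ u ^ 2 := by
      rw [hu2, le_div_iff₀ hω]
      have := (le_div_iff₀ hs1).mp hωle
      linarith
    constructor
    · simp only [Set.mem_Ioo, e1, e2]
      exact coreTildeIn ht0 hs0 hu hr hr2 hsgn hreg
    · simp only [Set.mem_Ioo, e3, e4]
      intro hc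
      exact coreHatFail ht0 hs0 hu hr hr2 hsgn hreg2 hc.1
  · intro ω hωgt
    have hω : 0 < ω := lt_trans (div_pos (by positivity) hs1) hωgt
    obtain ⟨u, r, hu, hr, hr2, hu2, e1, e2, e3, e4⟩ := setup ω hω
    have hreg2 : u ^ 2 < (s - 1) ^ 2 := by
      rw [hu2, div_lt_iff₀ hω]
      have := (div_lt_iff₀ hs1).mp hωgt
      linarith
    have hreg : u < s + 1 := by nlinarith
    constructor
    · simp only [Set.mem_Ioo, e1, e2]
      exact coreTildeIn ht0 hs0 hu hr hr2 hsgn hreg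
    · simp only [Set.mem_Ioo, e3, e4]
      exact coreHatIn ht0 hs0 hu hr hr2 hsgn hreg2
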